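/- Every finite triangle-free unit disk graph (proximity model in ℝ² with adjacency threshold 2) admits a proper vertex coloring with 4 colors; i.e., its chromatic number is at most 4. -/

import Mathlib

/-- Unit disk graph in the proximity model: vertices are mapped to points in the
plane and two distinct vertices are adjacent iff their points are at distance ≤ 2. -/
def unitDiskGraph {V : Type*} (P : V → EuclideanSpace ℝ (Fin 2)) : SimpleGraph V where
  Adj u v := u ≠ v ∧ dist (P u) (P v) ≤ 2
  symm := by
    constructor
    intro u v h
    exact ⟨h.1.symm, by rw [dist_comm]; exact h.2⟩
  loopless := by
    constructor
    intro v h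
    exact h.1 rfl

/-!
Let `v` be a vertex whose point has minimal first coordinate. Its neighbours lie in the closed
right half-disk of radius 2 about `P v`, so seen from `P v` their arguments lie in
`[-π/2, π/2]`, and among any four of them two have arguments at most `π/3` apart. By the law
of cosines these two are within distance 2 of each other, which would close a triangle with `v`.
So every finite triangle-free unit disk graph is 3-degenerate, and colouring greedily in a
degeneracy order uses at most 4 colours.
-/

open Real InnerProductGeometry Finset

namespace SimpleGraph

variable {V : Type*} (G : SimpleGraph V) [DecidableRel G.Adj]

def Degenerate (k : ℕ) : Prop :=
  ∀ s : Finset V, s.Nonempty → ∃ v ∈ s, #{u ∈ s | G.Adj v u} ≤ k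

variable {G}

theorem Degenerate.exists_coloring_on {k : ℕ} (hG : G.Degenerate k) (s : Finset V) :
    ∃ C : V → Fin (k + 1), ∀ u ∈ s, ∀ w ∈ s, G.Adj u w → C u ≠ C w := by
  classical
  induction s using Finset.strongInduction with
  | _ s ih =>
  rcases s.eq_empty_or_nonempty with rfl | hs
  · exact ⟨0, by simp⟩
  obtain ⟨v, hv, hdeg⟩ := hG s hs
  obtain ⟨C, hC⟩ := ih (s.erase v) (erase_ssubset hv)
  set N := {u ∈ s | G.Adj v u}
  obtain ⟨c, -, hc⟩ : ∃ c ∈ (univ : Finset (Fin (k + 1))), c ∉ N.image C :=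
    exists_mem_notMem_of_card_lt_card <| by
      simpa using (card_image_le (s := N) (f := C)).trans_lt (Nat.lt_succ_of_le hdeg)
  have hfree : ∀ w ∈ s, G.Adj v w → c ≠ C w := fun w hw hvw hcw =>
    hc (hcw ▸ mem_image_of_mem C (mem_filter.mpr ⟨hw, hvw⟩))
  refine ⟨Function.update C v c, fun u hu w hw huw => ?_⟩
  by_cases huv : u = v <;> by_cases hwv : w = v
  · exact absurd (huv.trans hwv.symm) (G.ne_of_adj huw)
  · subst huv; simpa [hwv] using hfree w hw huw
  · subst hwv; simpa [huv] using (hfree u hu huw.symm).symm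
  · simpa [huv, hwv] using hC u (mem_erase.mpr ⟨huv, hu⟩) w (mem_erase.mpr ⟨hwv, hw⟩) huw

theorem Degenerate.colorable [Fintype V] {k : ℕ} (hG : G.Degenerate k) : G.Colorable (k + 1) :=
  let ⟨C, hC⟩ := hG.exists_coloring_on univ
  ⟨Coloring.mk C fun huw => hC _ (mem_univ _) _ (mem_univ _) huw⟩

end SimpleGraph

theorem norm_sub_le_of_angle_le_pi_div_three {E : Type*} [NormedAddCommGroup E]
    [InnerProductSpace ℝ E] {x y : E} {r : ℝ} (hx : ‖x‖ ≤ r) (hy : ‖y‖ ≤ r)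
    (hangle : angle x y ≤ π / 3) : ‖x - y‖ ≤ r := by
  have hcos : 1 / 2 ≤ cos (angle x y) := by
    rw [← cos_pi_div_three]
    exact cos_le_cos_of_nonneg_of_le_pi (angle_nonneg x y) (by linarith [pi_pos]) hangle
  have hsq : ‖x - y‖ * ‖x - y‖ ≤ r * r := by
    rw [norm_sub_sq_eq_norm_sq_add_norm_sq_sub_two_mul_norm_mul_norm_mul_cos_angle]
    nlinarith [norm_nonneg x, norm_nonneg y, mul_nonneg (norm_nonneg x) (norm_nonneg y),
      mul_le_mul hx hy (norm_nonneg y) ((norm_nonneg x).trans hx)]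
  exact (mul_self_le_mul_self_iff (norm_nonneg _) ((norm_nonneg x).trans hx)).mpr hsq

theorem exists_ne_abs_sub_le_of_forall_mem_Icc {n : ℕ} (hn : 0 < n) {a d : ℝ} (hd : 0 < d)
    (θ : Fin (n + 1) → ℝ) (hθ : ∀ i, θ i ∈ Set.Icc a (a + n * d)) :
    ∃ i j, i ≠ j ∧ |θ i - θ j| ≤ d := by
  set x : Fin (n + 1) → ℝ := fun i => (θ i - a) / d
  set bucket : Fin (n + 1) → ℕ := fun i => min ⌊x i⌋₊ (n - 1)
  have hbucket : ∀ i, bucket i ≤ x i ∧ x i ≤ bucket i + 1 := by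
    intro i
    have hx0 : 0 ≤ x i := div_nonneg (by linarith [(hθ i).1]) hd.le
    have hxn : x i ≤ n := by rw [div_le_iff₀ hd]; linarith [(hθ i).2]
    refine ⟨(Nat.cast_le.mpr (min_le_left _ _)).trans (Nat.floor_le hx0), ?_⟩
    -- the top bucket `n - 1` is closed on the right, to catch `x i = n`
    rcases min_cases ⌊x i⌋₊ (n - 1) with ⟨hmin, -⟩ | ⟨hmin, -⟩
    · simp only [bucket, hmin]; exact (Nat.lt_floor_add_one _).le
    · simp only [bucket, hmin]; rw [Nat.cast_sub hn]; push_cast; linarith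
  obtain ⟨i, -, j, -, hij, heq⟩ := exists_ne_map_eq_of_card_lt_of_maps_to
    (s := univ) (t := range n) (by simp) (f := bucket)
    (fun i _ => mem_range.mpr (by simp only [bucket]; omega))
  have hx : |x i - x j| ≤ 1 := by
    have hi := hbucket i; have hj := hbucket j; rw [heq] at hi
    exact abs_sub_le_iff.mpr ⟨by linarith, by linarith⟩
  refine ⟨i, j, hij, ?_⟩
  have hθx : θ i - θ j = d * (x i - x j) := by simp only [x]; field_simp; ring
  calc |θ i - θ j| = d * |x i - x j| := by rw [hθx, abs_mul, abs_of_pos hd]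
    _ ≤ d := mul_le_of_le_one_right hd.le hx

theorem Complex.angle_eq_abs_arg_sub {x y : ℂ} (hx : x ≠ 0) (hy : y ≠ 0)
    (h : |x.arg - y.arg| < π) : angle x y = |x.arg - y.arg| := by
  have hdiv : (x / y).arg = x.arg - y.arg := by
    rw [← arg_coe_angle_toReal_eq_arg, arg_div_coe_angle hx hy, ← Real.Angle.coe_sub,
      Real.Angle.toReal_coe_eq_self_iff]
    constructor <;> linarith [abs_lt.mp h]
  rw [angle_eq_abs_arg hx hy, hdiv]

theorem Complex.norm_sub_le_of_abs_arg_sub_le {z w : ℂ} {r : ℝ} (hz : ‖z‖ ≤ r) (hw : ‖w‖ ≤ r)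
    (harg : |z.arg - w.arg| ≤ π / 3) : ‖z - w‖ ≤ r := by
  rcases eq_or_ne z 0 with rfl | hz0
  · simpa using hw
  rcases eq_or_ne w 0 with rfl | hw0
  · simpa using hz
  refine norm_sub_le_of_angle_le_pi_div_three hz hw ?_
  rwa [angle_eq_abs_arg_sub hz0 hw0 (by linarith [pi_pos])]

theorem Complex.exists_ne_norm_sub_le_of_re_nonneg {r : ℝ} (z : Fin 4 → ℂ)
    (hre : ∀ i, 0 ≤ (z i).re) (hr : ∀ i, ‖z i‖ ≤ r) : ∃ i j, i ≠ j ∧ ‖z i - z j‖ ≤ r := by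
  have harg : ∀ i, (z i).arg ∈ Set.Icc (-(π / 2)) (-(π / 2) + (3 : ℕ) * (π / 3)) := by
    intro i
    have := abs_le.mp (abs_arg_le_pi_div_two_iff.mpr (hre i))
    constructor <;> push_cast <;> linarith
  obtain ⟨i, j, hij, hij_arg⟩ :=
    exists_ne_abs_sub_le_of_forall_mem_Icc (by norm_num) (by positivity) _ harg
  exact ⟨i, j, hij, norm_sub_le_of_abs_arg_sub_le (hr i) (hr j) hij_arg⟩

theorem EuclideanSpace.exists_ne_dist_le_of_forall_dist_le_of_forall_apply_zero_le
    {r : ℝ} (c : EuclideanSpace ℝ (Fin 2)) (p : Fin 4 → EuclideanSpace ℝ (Fin 2))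
    (hdist : ∀ i, dist c (p i) ≤ r) (hleft : ∀ i, c 0 ≤ p i 0) :
    ∃ i j, i ≠ j ∧ dist (p i) (p j) ≤ r := by
  let e := Complex.orthonormalBasisOneI.repr.symm
  obtain ⟨i, j, hij, hle⟩ := Complex.exists_ne_norm_sub_le_of_re_nonneg (r := r)
    (fun i => e (p i - c)) (fun i => by simpa [e] using hleft i)
    (fun i => by rw [LinearIsometryEquiv.norm_map, ← dist_eq_norm']; exact hdist i)
  refine ⟨i, j, hij, ?_⟩
  rwa [← map_sub, sub_sub_sub_cancel_right, LinearIsometryEquiv.norm_map, ← dist_eq_norm] at hle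

section UnitDisk

variable {V : Type*} (P : V → EuclideanSpace ℝ (Fin 2)) [DecidableRel (unitDiskGraph P).Adj]

theorem card_filter_unitDiskGraph_adj_le_three (htf : (unitDiskGraph P).CliqueFree 3)
    (s : Finset V) {v : V} (hleft : ∀ u ∈ s, P v 0 ≤ P u 0) :
    #{u ∈ s | (unitDiskGraph P).Adj v u} ≤ 3 := by
  classical
  set N := {u ∈ s | (unitDiskGraph P).Adj v u}
  by_contra! hN
  let q : Fin 4 → V := fun i => N.equivFin.symm (Fin.castLE hN i)
  have hq : ∀ i, q i ∈ s ∧ (unitDiskGraph P).Adj v (q i) :=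
    fun i => mem_filter.mp (N.equivFin.symm _).2
  obtain ⟨i, j, hij, hdist⟩ :=
    EuclideanSpace.exists_ne_dist_le_of_forall_dist_le_of_forall_apply_zero_le (P v) (P ∘ q)
      (fun i => (hq i).2.2) (fun i => hleft _ (hq i).1)
  have hqij : q i ≠ q j := fun h => hij (by simpa [q] using h)
  exact htf {v, q i, q j} (SimpleGraph.is3Clique_triple_iff.mpr ⟨(hq i).2, (hq j).2, hqij, hdist⟩)

theorem unitDiskGraph_degenerate (htf : (unitDiskGraph P).CliqueFree 3) :
    (unitDiskGraph P).Degenerate 3 := fun s hs =>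
  let ⟨v, hv, hleft⟩ := s.exists_min_image (fun u => P u 0) hs
  ⟨v, hv, card_filter_unitDiskGraph_adj_le_three P htf s hleft⟩

end UnitDisk

/-- Every finite triangle-free unit disk graph can be properly colored with 4
colors. -/
theorem triangleFree_unitDiskGraph_chromaticNumber_le_four {V : Type*} [Fintype V]
    (P : V → EuclideanSpace ℝ (Fin 2))
    (htf : (unitDiskGraph P).CliqueFree 3) :
    (unitDiskGraph P).chromaticNumber ≤ 4 := by
  classical
  exact_mod_cast (unitDiskGraph_degenerate P htf).colorable.chromaticNumber_le
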